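/- arXiv:1306.6419 — 2 statements merged into one kernel-verified Lean document; each statement's English description precedes it below -/
import Mathlib

section
/- Let f, g₁, …, g_m be convex polynomials on ℝ^n with K = {x : gᵢ(x) ≤ 0, i = 1,…,m} nonempty, let x* be a minimizer of f over K, and let ε > 0. Then there exists δ > 0 such that f(x) + ε − f(x*) > 0 for all x ∈ K_δ := {x : gᵢ(x) ≤ δ, i = 1,…,m}. -/
/-!
Suppose not: then there are points `x k` with `g i (x k) ≤ 1 / (k + 1)` and
`f (x k) ≤ f xs - ε`. A bounded subsequence would have a feasible limit point below the minimum,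
so `x k` escapes to infinity and its directions accumulate at a unit vector `u` along which `f`
and every `g i` are nonincreasing from `xs`. A convex polynomial bounded above on a ray is affine
along every parallel line, with one common slope; hence `f` is invariant along `u` (by
minimality) and each `g i` has a constant slope `α i ≤ 0`. Constraints with `α i < 0` can be
met by moving along `u`, so dropping them keeps `xs` a minimizer; projecting the sequence along
`u` onto a hyperplane then lowers the dimension of the affine subspace containing it, and we
conclude by induction on that subspace.
-/

open Filter Set Topology Polynomial

def IsPolynomialOnLines {E : Type*} [AddCommGroup E] [Module ℝ E] (φ : E → ℝ) : Prop :=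
  ∀ y u : E, ∃ P : ℝ[X], ∀ t, φ (y + t • u) = P.eval t

theorem MvPolynomial.isPolynomialOnLines_eval {σ : Type*} (p : MvPolynomial σ ℝ) :
    IsPolynomialOnLines fun x => MvPolynomial.eval x p := by
  intro y u
  let line : σ → ℝ[X] := fun i => Polynomial.C (y i) + Polynomial.C (u i) * Polynomial.X
  refine ⟨aeval line p, fun t => ?_⟩
  have hline : (fun i => Polynomial.aeval t (line i)) = y + t • u := by
    funext i
    simp only [line, map_add, map_mul, Polynomial.aeval_C, Polynomial.aeval_X,
      Algebra.algebraMap_self, RingHom.id_apply, Pi.add_apply, Pi.smul_apply, smul_eq_mul]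
    ring
  rw [← Polynomial.coe_aeval_eq_eval, ← AlgHom.comp_apply, comp_aeval, hline]
  rfl

namespace Polynomial

theorem natDegree_le_one_of_convexOn_of_bddAbove {P : ℝ[X]} (hP : ConvexOn ℝ univ (P.eval ·))
    {B : ℝ} (hB : ∀ t, 0 ≤ t → P.eval t ≤ B) : P.natDegree ≤ 1 := by
  by_contra! hdeg
  set R := P - C (P.eval 0)
  have hdegR : (X : ℝ[X]).degree < R.degree := by
    have h1 : ((1 : ℕ) : WithBot ℕ) < P.degree := coe_lt_degree.2 hdeg
    rw [degree_sub_C (lt_trans (by norm_num) h1), degree_X]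
    exact_mod_cast h1
  set M := |P.eval 1 - P.eval 0| + |B - P.eval 0|
  -- `R t / t` is a secant slope of `P` from `0`: bounded below by the slope on `[0, 1]`, and
  -- bounded above because `P ≤ B`; but it diverges since `R` has degree at least `2`.
  have hbound : ∀ t, 1 ≤ t → |R.eval t / X.eval t| ≤ M := by
    intro t ht
    have hsec := hP.secant_mono (mem_univ 0) (mem_univ 1) (mem_univ t) one_ne_zero
      (by positivity) ht
    simp only [sub_zero, div_one] at hsec
    have hup : (P.eval t - P.eval 0) / t ≤ |B - P.eval 0| := by
      rw [div_le_iff₀ (by positivity)]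
      nlinarith [hB t (by linarith), le_abs_self (B - P.eval 0), abs_nonneg (B - P.eval 0)]
    simp only [R, eval_sub, eval_C, eval_X]
    rw [abs_le]
    constructor <;> nlinarith [neg_abs_le (P.eval 1 - P.eval 0), abs_nonneg (B - P.eval 0),
      abs_nonneg (P.eval 1 - P.eval 0)]
  obtain ⟨t, ht, ht1⟩ := ((abs_div_tendsto_atTop_atTop_of_degree_gt R X hdegR
    X_ne_zero).eventually_gt_atTop M |>.and (eventually_ge_atTop 1)).exists
  exact (hbound t ht1).not_gt ht

theorem eval_eq_add_mul_of_natDegree_le_one {P : ℝ[X]} (hP : P.natDegree ≤ 1) (t : ℝ) :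
    P.eval t = P.eval 0 + t * (P.eval 1 - P.eval 0) := by
  rw [eq_X_add_C_of_natDegree_le_one hP]
  simp only [eval_add, eval_mul, eval_C, eval_X, mul_zero, zero_add, mul_one, add_sub_cancel_right]
  ring

end Polynomial

namespace ConvexOn

section Module

variable {E : Type*} [AddCommGroup E] [Module ℝ E] {φ : E → ℝ}

theorem comp_lineMap (hφ : ConvexOn ℝ univ φ) (y u : E) :
    ConvexOn ℝ univ fun t : ℝ => φ (y + t • u) := by
  simpa [Function.comp_def, AffineMap.lineMap_apply_module', add_comm] using
    hφ.comp_affineMap (AffineMap.lineMap y (y + u))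

theorem convexOn_slope (hφ : ConvexOn ℝ univ φ) {u : E} {A : E → ℝ}
    (hA : ∀ y (t : ℝ), φ (y + t • u) = φ y + t * A y) : ConvexOn ℝ univ A := by
  refine ⟨convex_univ, fun p _ q _ a b ha hb hab => ?_⟩
  set m := a • p + b • q
  have hline (t : ℝ) : φ m + t * A m ≤ a * φ p + b * φ q + t * (a * A p + b * A q) := by
    have := hφ.2 (mem_univ (p + t • u)) (mem_univ (q + t • u)) ha hb hab
    rw [show a • (p + t • u) + b • (q + t • u) = m + t • u by
      linear_combination (norm := module) hab • t • u] at this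
    simp only [smul_eq_mul, hA] at this
    linarith
  by_contra! h
  set t := (a * φ p + b * φ q - φ m + 1) / (A m - (a * A p + b * A q))
  have ht : t * A m - t * (a * A p + b * A q) = a * φ p + b * φ q - φ m + 1 := by
    rw [← mul_sub]; exact div_mul_cancel₀ _ (sub_pos.2 h).ne'
  linarith [hline t]

end Module

variable {E : Type*} [AddCommGroup E] [Module ℝ E] [TopologicalSpace E] [ContinuousAdd E]
  [ContinuousSMul ℝ E] {φ : E → ℝ}

theorem apply_add_smul_le_of_tendsto (hφ : ConvexOn ℝ univ φ) (hc : Continuous φ)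
    {α : Type*} {l : Filter α} [l.NeBot] {X : α → E} {T : α → ℝ} {a u : E} {B : ℝ}
    (hT : Tendsto T l atTop) (hu : Tendsto (fun j => (T j)⁻¹ • (X j - a)) l (𝓝 u))
    (hB : ∀ᶠ j in l, φ (X j) ≤ B) {t : ℝ} (ht : 0 ≤ t) : φ (a + t • u) ≤ φ a := by
  have hweight : Tendsto (fun j => t * (T j)⁻¹) l (𝓝 0) := by
    simpa using (tendsto_inv_atTop_zero.comp hT).const_mul t
  have hpt : Tendsto (fun j => a + t • ((T j)⁻¹ • (X j - a))) l (𝓝 (a + t • u)) :=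
    tendsto_const_nhds.add (hu.const_smul t)
  have hbound : Tendsto (fun j => φ a + t * (T j)⁻¹ * (B - φ a)) l (𝓝 (φ a)) := by
    simpa using (hweight.mul_const (B - φ a)).const_add (φ a)
  refine le_of_tendsto_of_tendsto ((hc.tendsto _).comp hpt) hbound ?_
  filter_upwards [hB, hT.eventually_ge_atTop t, hT.eventually_gt_atTop 0] with j hBj htj hTj
  set c := t * (T j)⁻¹ with hc_def
  have hc0 : 0 ≤ c := by positivity
  have hc1 : c ≤ 1 := by rw [hc_def, ← div_eq_mul_inv, div_le_one hTj]; exact htj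
  calc φ (a + t • ((T j)⁻¹ • (X j - a))) = φ ((1 - c) • a + c • X j) := by
        congr 1; simp only [hc_def, smul_sub, smul_smul]; module
    _ ≤ (1 - c) * φ a + c * φ (X j) :=
        hφ.2 (mem_univ a) (mem_univ (X j)) (sub_nonneg.2 hc1) hc0 (sub_add_cancel 1 c)
    _ ≤ φ a + c * (B - φ a) := by nlinarith [mul_le_mul_of_nonneg_left hBj hc0]

theorem apply_add_smul_le_of_bddAbove_ray (hφ : ConvexOn ℝ univ φ) (hc : Continuous φ) {a u : E}
    {B : ℝ} (hB : ∀ t : ℝ, 0 ≤ t → φ (a + t • u) ≤ B) (y : E) {s : ℝ} (hs : 0 ≤ s) :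
    φ (y + s • u) ≤ φ y := by
  have hu : Tendsto (fun t : ℝ => t⁻¹ • (a + t • u - y)) atTop (𝓝 u) := by
    have : Tendsto (fun t : ℝ => t⁻¹ • (a - y) + u) atTop (𝓝 u) := by
      simpa using ((tendsto_inv_atTop_zero (𝕜 := ℝ)).smul_const (a - y)).add_const u
    refine this.congr' ((eventually_ne_atTop 0).mono fun t ht => ?_)
    dsimp only
    rw [add_sub_right_comm, smul_add, smul_smul, inv_mul_cancel₀ ht, one_smul]
  exact hφ.apply_add_smul_le_of_tendsto hc tendsto_id hu
    ((eventually_ge_atTop 0).mono fun t ht => hB t ht) hs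

theorem eq_of_bddAbove (hφ : ConvexOn ℝ univ φ) (hc : Continuous φ) {B : ℝ}
    (hB : ∀ x, φ x ≤ B) (x y : E) : φ x = φ y := by
  have key : ∀ x y, φ y ≤ φ x := fun x y => by
    simpa using hφ.apply_add_smul_le_of_bddAbove_ray hc (a := x) (u := y - x)
      (fun t _ => hB _) x zero_le_one
  exact le_antisymm (key y x) (key x y)

end ConvexOn

theorem ConvexOn.continuous {E : Type*} [NormedAddCommGroup E] [NormedSpace ℝ E]
    [FiniteDimensional ℝ E] {f : E → ℝ} (hf : ConvexOn ℝ univ f) : Continuous f :=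
  continuousOn_univ.mp (hf.continuousOn isOpen_univ)

namespace IsPolynomialOnLines

variable {E : Type*} [AddCommGroup E] [Module ℝ E] [TopologicalSpace E] [ContinuousAdd E]
  [ContinuousSMul ℝ E] {φ : E → ℝ}

theorem exists_slope_of_bddAbove_ray (hp : IsPolynomialOnLines φ) (hφ : ConvexOn ℝ univ φ)
    (hc : Continuous φ) {a u : E} {B : ℝ} (hB : ∀ t : ℝ, 0 ≤ t → φ (a + t • u) ≤ B) :
    ∃ α ≤ 0, ∀ y (t : ℝ), φ (y + t • u) = φ y + t * α := by
  have hanti : ∀ y (s : ℝ), 0 ≤ s → φ (y + s • u) ≤ φ y := fun y s hs =>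
    hφ.apply_add_smul_le_of_bddAbove_ray hc hB y hs
  set A : E → ℝ := fun y => φ (y + u) - φ y
  have haff : ∀ y (t : ℝ), φ (y + t • u) = φ y + t * A y := by
    intro y t
    obtain ⟨P, hP⟩ := hp y u
    have hPc : ConvexOn ℝ univ (P.eval ·) := by
      simpa only [← hP] using hφ.comp_lineMap y u
    have hdeg := natDegree_le_one_of_convexOn_of_bddAbove hPc fun s hs =>
      hP s ▸ hanti y s hs
    have h0 : φ y = P.eval 0 := by simpa using hP 0
    have h1 : φ (y + u) = P.eval 1 := by simpa using hP 1
    simp only [A]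
    rw [hP, h1, h0]
    exact eval_eq_add_mul_of_natDegree_le_one hdeg t
  have hAc : Continuous A := (hc.comp (continuous_id.add continuous_const)).sub hc
  have hA0 : ∀ y, A y ≤ 0 := fun y => by simpa [A] using hanti y 1 zero_le_one
  refine ⟨A a, hA0 a, fun y t => ?_⟩
  rw [haff, (hφ.convexOn_slope haff).eq_of_bddAbove hAc hA0 y a]

end IsPolynomialOnLines

theorem exists_subseq_tendsto_inv_norm_smul {E : Type*} [NormedAddCommGroup E] [NormedSpace ℝ E]
    [ProperSpace E] {y : ℕ → E} (hy : Tendsto (‖y ·‖) atTop atTop) :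
    ∃ u, ‖u‖ = 1 ∧ ∃ σ : ℕ → ℕ, StrictMono σ ∧
      Tendsto (fun j => ‖y (σ j)‖⁻¹ • y (σ j)) atTop (𝓝 u) := by
  have hball : ∀ k, ‖y k‖⁻¹ • y k ∈ Metric.closedBall (0 : E) 1 := fun k => by
    rw [mem_closedBall_zero_iff, norm_smul, norm_inv, norm_norm]
    exact inv_mul_le_one_of_le₀ le_rfl (norm_nonneg _)
  obtain ⟨u, -, σ, hσ, hu⟩ := (isCompact_closedBall (0 : E) 1).tendsto_subseq hball
  refine ⟨u, tendsto_nhds_unique hu.norm (tendsto_const_nhds.congr' ?_), σ, hσ, hu⟩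
  filter_upwards [(hy.comp hσ.tendsto_atTop).eventually_gt_atTop 0] with j hj
  simp only [Function.comp_apply, norm_smul, norm_inv, norm_norm] at hj ⊢
  exact (inv_mul_cancel₀ hj.ne').symm

theorem tendsto_norm_sub_atTop_of_le_of_isMinOn {E ι : Type*} [NormedAddCommGroup E]
    [ProperSpace E] {f : E → ℝ} {g : ι → E → ℝ} (hf : Continuous f) (hg : ∀ i, Continuous (g i))
    {J : Finset ι} {xs : E} (hmin : IsMinOn f {x | ∀ i ∈ J, g i x ≤ 0} xs) {x : ℕ → E}
    {δ : ℕ → ℝ} (hδ : Tendsto δ atTop (𝓝 0)) (hxg : ∀ k, ∀ i ∈ J, g i (x k) ≤ δ k) {c : ℝ}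
    (hxf : ∀ k, f (x k) ≤ c) (hc : c < f xs) : Tendsto (‖x · - xs‖) atTop atTop := by
  by_contra hx
  obtain ⟨M, hM⟩ : ∃ M, ∃ᶠ k in atTop, x k ∈ Metric.closedBall xs M := by
    simp only [tendsto_atTop, not_forall, not_eventually, not_le] at hx
    obtain ⟨M, hM⟩ := hx
    exact ⟨M, hM.mono fun k hk => by rw [Metric.mem_closedBall, dist_eq_norm]; exact hk.le⟩
  obtain ⟨xb, -, σ, hσ, hlim⟩ :=
    tendsto_subseq_of_frequently_bounded Metric.isBounded_closedBall hM
  have hxb : ∀ i ∈ J, g i xb ≤ 0 := fun i hi =>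
    le_of_tendsto_of_tendsto (((hg i).tendsto xb).comp hlim) (hδ.comp hσ.tendsto_atTop)
      (Eventually.of_forall fun j => hxg _ i hi)
  have hfb : f xb ≤ c :=
    le_of_tendsto ((hf.tendsto xb).comp hlim) (Eventually.of_forall fun j => hxf _)
  exact (isMinOn_iff.1 hmin xb hxb).not_gt (hfb.trans_lt hc)

theorem IsMinOn.filter_slope_eq_zero {E ι : Type*} [AddCommGroup E] [Module ℝ E] {f : E → ℝ}
    {g : ι → E → ℝ} {J : Finset ι} {xs u : E} {α : ι → ℝ}
    (hmin : IsMinOn f {x | ∀ i ∈ J, g i x ≤ 0} xs) (hfu : ∀ y (t : ℝ), f (y + t • u) = f y)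
    (hα : ∀ i ∈ J, α i ≤ 0) (hgu : ∀ i ∈ J, ∀ y (t : ℝ), g i (y + t • u) = g i y + t * α i) :
    IsMinOn f {x | ∀ i ∈ J.filter (α · = 0), g i x ≤ 0} xs := by
  refine isMinOn_iff.2 fun x hx => ?_
  have hshift : ∀ i ∈ J, ∀ᶠ s : ℝ in atTop, g i (x + s • u) ≤ 0 := fun i hi => by
    simp_rw [hgu i hi]
    rcases (hα i hi).lt_or_eq with hneg | hzero
    · exact (tendsto_atBot_add_const_left _ _
        (tendsto_id.atTop_mul_const_of_neg hneg)).eventually_le_atBot 0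
    · simp only [hzero, mul_zero, add_zero]
      exact .of_forall fun _ => hx i (Finset.mem_filter.2 ⟨hi, hzero⟩)
  obtain ⟨s, hs⟩ := ((eventually_all_finset J).2 hshift).exists
  simpa [hfu] using isMinOn_iff.1 hmin (x + s • u) hs

section ConvexPolynomialProgram

variable {E ι : Type*} [NormedAddCommGroup E] [NormedSpace ℝ E] [FiniteDimensional ℝ E]
  {f : E → ℝ} {g : ι → E → ℝ}

theorem exists_recession_direction_of_isMinOn (hf : ConvexOn ℝ univ f)
    (hg : ∀ i, ConvexOn ℝ univ (g i)) {V : Submodule ℝ E} {J : Finset ι} {xs : E}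
    (hmin : IsMinOn f {x | ∀ i ∈ J, g i x ≤ 0} xs) {x : ℕ → E} {δ : ℕ → ℝ}
    (hδ : Tendsto δ atTop (𝓝 0)) (hxV : ∀ k, x k - xs ∈ V) (hxg : ∀ k, ∀ i ∈ J, g i (x k) ≤ δ k)
    {c : ℝ} (hxf : ∀ k, f (x k) ≤ c) (hc : c < f xs) :
    ∃ u ∈ V, ‖u‖ = 1 ∧ (∀ t : ℝ, 0 ≤ t → f (xs + t • u) ≤ f xs) ∧
      ∀ i ∈ J, ∀ t : ℝ, 0 ≤ t → g i (xs + t • u) ≤ g i xs := by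
  have hgc i : Continuous (g i) := (hg i).continuous
  have hT := tendsto_norm_sub_atTop_of_le_of_isMinOn hf.continuous hgc hmin hδ hxg hxf hc
  obtain ⟨u, hu, σ, hσ, hlim⟩ := exists_subseq_tendsto_inv_norm_smul hT
  have hTσ := hT.comp hσ.tendsto_atTop
  have hδσ : ∀ᶠ j in atTop, δ (σ j) ≤ 1 :=
    (hδ.comp hσ.tendsto_atTop).eventually (eventually_le_nhds one_pos)
  refine ⟨u, V.closed_of_finiteDimensional.mem_of_tendsto hlim
    (.of_forall fun j => V.smul_mem _ (hxV _)), hu, fun t ht => ?_, fun i hi t ht => ?_⟩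
  · exact hf.apply_add_smul_le_of_tendsto hf.continuous hTσ hlim
      (.of_forall fun j => hxf (σ j)) ht
  · exact (hg i).apply_add_smul_le_of_tendsto (hgc i) hTσ hlim
      (hδσ.mono fun j hj => (hxg _ i hi).trans hj) ht

theorem exists_pos_forall_lt_of_isMinOn (hf : ConvexOn ℝ univ f) (hfp : IsPolynomialOnLines f)
    (hg : ∀ i, ConvexOn ℝ univ (g i)) (hgp : ∀ i, IsPolynomialOnLines (g i))
    (V : Submodule ℝ E) (J : Finset ι) {xs : E} (hxs : ∀ i ∈ J, g i xs ≤ 0)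
    (hmin : IsMinOn f {x | ∀ i ∈ J, g i x ≤ 0} xs) {ε : ℝ} (hε : 0 < ε) :
    ∃ δ > 0, ∀ x, x - xs ∈ V → (∀ i ∈ J, g i x ≤ δ) → f xs - ε < f x := by
  induction V using WellFoundedLT.induction generalizing J with
  | _ V ih =>
  by_contra! hbad
  choose x hxV hxg hxf using fun k : ℕ => hbad (1 / (k + 1)) (by positivity)
  obtain ⟨u, huV, hu, hfu, hgu⟩ := exists_recession_direction_of_isMinOn hf hg hmin
    tendsto_one_div_add_atTop_nhds_zero_nat hxV hxg hxf (sub_lt_self _ hε)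
  have hf_inv : ∀ y (t : ℝ), f (y + t • u) = f y := by
    obtain ⟨β, hβ, hfβ⟩ := hfp.exists_slope_of_bddAbove_ray hf hf.continuous hfu
    have : f xs ≤ f (xs + u) := isMinOn_iff.1 hmin _ fun i hi => by
      simpa using (hgu i hi 1 zero_le_one).trans (hxs i hi)
    have hβ0 : β = 0 :=
      le_antisymm hβ (by linarith [this.trans_eq (by simpa using hfβ xs 1)])
    simpa [hβ0] using hfβ
  choose! α hα hgα using fun i (hi : i ∈ J) =>
    (hgp i).exists_slope_of_bddAbove_ray (hg i) (hg i).continuous (hgu i hi)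
  obtain ⟨ℓ, -, hℓ⟩ := exists_dual_vector ℝ u (by simp [hu])
  have hℓu : ℓ u = 1 := by simpa [hu] using hℓ
  have hW : V ⊓ LinearMap.ker (ℓ : E →ₗ[ℝ] ℝ) < V := inf_lt_left.2 fun h => by
    simpa [hℓu] using LinearMap.mem_ker.1 (h huV)
  obtain ⟨δ, hδ, hδW⟩ := ih _ hW (J.filter (α · = 0))
    (fun i hi => hxs i (Finset.mem_of_mem_filter i hi))
    (hmin.filter_slope_eq_zero hf_inv hα hgα)
  obtain ⟨k, hk⟩ := exists_nat_one_div_lt hδ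
  have hproj : x k + (-ℓ (x k - xs)) • u - xs ∈ V ⊓ LinearMap.ker (ℓ : E →ₗ[ℝ] ℝ) := by
    rw [add_sub_right_comm]
    refine ⟨V.add_mem (hxV k) (V.smul_mem _ huV), ?_⟩
    simp [hℓu]
  refine (hxf k).not_gt ?_
  simpa [hf_inv] using hδW _ hproj fun i hi => by
    obtain ⟨hiJ, hi0⟩ := Finset.mem_filter.1 hi
    rw [hgα i hiJ, hi0, mul_zero, add_zero]
    exact (hxg k i hiJ).trans hk.le

end ConvexPolynomialProgram

/-- Positivity of `f + ε - f(x*)` persists on a slightly enlarged feasible set `K_δ`. -/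
theorem convex_poly_positivity_on_enlarged_set {n m : ℕ}
    (pf : MvPolynomial (Fin n) ℝ) (pg : Fin m → MvPolynomial (Fin n) ℝ)
    (f : (Fin n → ℝ) → ℝ) (g : Fin m → (Fin n → ℝ) → ℝ)
    (hf : ∀ x, f x = MvPolynomial.eval x pf)
    (hg : ∀ i x, g i x = MvPolynomial.eval x (pg i))
    (hfc : ConvexOn ℝ Set.univ f) (hgc : ∀ i, ConvexOn ℝ Set.univ (g i))
    (K : Set (Fin n → ℝ)) (hK : K = {x | ∀ i, g i x ≤ 0})
    (xs : Fin n → ℝ) (hxs : xs ∈ K) (hmin : ∀ x ∈ K, f xs ≤ f x)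
    (ε : ℝ) (hε : 0 < ε) :
    ∃ δ > (0 : ℝ), ∀ x : Fin n → ℝ, (∀ i, g i x ≤ δ) → 0 < f x + ε - f xs := by
  subst hK
  have hfp : IsPolynomialOnLines f := by
    rw [funext hf]; exact MvPolynomial.isPolynomialOnLines_eval pf
  have hgp i : IsPolynomialOnLines (g i) := by
    rw [funext (hg i)]; exact MvPolynomial.isPolynomialOnLines_eval (pg i)
  obtain ⟨δ, hδ, hlt⟩ := exists_pos_forall_lt_of_isMinOn hfc hfp hgc hgp ⊤ Finset.univ
    (fun i _ => hxs i) (isMinOn_iff.2 fun x hx => hmin x fun i => hx i (Finset.mem_univ i)) hε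
  exact ⟨δ, hδ, fun x hx => by linarith [hlt x Submodule.mem_top fun i _ => hx i]⟩
end

section
/- Let f be a convex differentiable function on ℝ^n, g₁,…,g_m convex differentiable functions, x* ∈ K = {x : gᵢ(x) ≤ 0 ∀i}, and λ* ∈ ℝ₊^m. If ∇f(x*) + Σᵢ λᵢ*∇gᵢ(x*) = 0 and λᵢ* gᵢ(x*) = 0 for each i, then (x*, λ*) is a saddle-point of the Lagrangian L(x,λ) = f(x) + Σᵢ λᵢgᵢ(x), i.e., L(x, λ*) ≥ L(x*, λ*) ≥ L(x*, λ) for all x ∈ ℝ^n, λ ∈ ℝ₊^m. -/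
/-!
Since `λ* ≥ 0`, the function `L(·, λ*)` is convex, and the KKT gradient condition says that its
derivative vanishes at `x*`; a convex function lies above its tangent planes, so `x*` minimizes it.
In the other variable, complementary slackness gives `L(x*, λ*) = f(x*)`, while feasibility of `x*`
gives `λᵢ gᵢ(x*) ≤ 0` for every `λ ≥ 0`.
-/

open Set

theorem ConvexOn.fun_sum {𝕜 E β ι : Type*} [Semiring 𝕜] [PartialOrder 𝕜] [AddCommMonoid E]
    [AddCommMonoid β] [PartialOrder β] [IsOrderedAddMonoid β] [SMul 𝕜 E] [Module 𝕜 β]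
    {s : Set E} {t : Finset ι} {F : ι → E → β} (hs : Convex 𝕜 s)
    (hF : ∀ i ∈ t, ConvexOn 𝕜 s (F i)) : ConvexOn 𝕜 s fun x => ∑ i ∈ t, F i x := by
  simpa only [Finset.sum_fn] using
    t.sum_induction F (ConvexOn 𝕜 s) (fun _ _ => ConvexOn.add) (convexOn_const 0 hs) hF

section Convex

variable {E : Type*} [NormedAddCommGroup E] [NormedSpace ℝ E] {s : Set E} {f : E → ℝ}

theorem ConvexOn.add_fderiv_sub_le {x y : E} {f' : E →L[ℝ] ℝ} (hf : ConvexOn ℝ s f)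
    (hx : x ∈ s) (hy : y ∈ s) (hf' : HasFDerivAt f f' x) : f x + f' (y - x) ≤ f y := by
  let ℓ : ℝ →ᵃ[ℝ] E := AffineMap.lineMap x y
  have hline : ConvexOn ℝ (ℓ ⁻¹' s) (f ∘ ℓ) := hf.comp_affineMap ℓ
  have hderiv : HasDerivAt (f ∘ ℓ) (f' (y - x)) 0 := by
    have hf'₀ : HasFDerivAt f f' (ℓ 0) := by rwa [AffineMap.lineMap_apply_zero]
    exact hf'₀.comp_hasDerivAt 0 AffineMap.hasDerivAt_lineMap
  have hslope := hline.le_slope_of_hasDerivAt (by simpa [ℓ] using hx) (by simpa [ℓ] using hy)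
    zero_lt_one hderiv
  simp only [slope, ℓ, Function.comp_apply, AffineMap.lineMap_apply_one,
    AffineMap.lineMap_apply_zero, sub_zero, inv_one, one_smul, vsub_eq_sub] at hslope
  linarith

theorem ConvexOn.isMinOn_of_hasFDerivAt_eq_zero {x : E} (hf : ConvexOn ℝ s f) (hx : x ∈ s)
    (hf' : HasFDerivAt f (0 : E →L[ℝ] ℝ) x) : IsMinOn f s x := fun y hy => by
  simpa using hf.add_fderiv_sub_le hx hy hf'

end Convex

/-- KKT conditions imply a saddle-point of the Lagrangian for convex differentiable data. -/
theorem kkt_implies_saddle_point {n m : ℕ}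
    (f : (Fin n → ℝ) → ℝ) (g : Fin m → (Fin n → ℝ) → ℝ)
    (hfc : ConvexOn ℝ Set.univ f) (hgc : ∀ i, ConvexOn ℝ Set.univ (g i))
    (hfd : Differentiable ℝ f) (hgd : ∀ i, Differentiable ℝ (g i))
    (K : Set (Fin n → ℝ)) (hK : K = {x | ∀ i, g i x ≤ 0})
    (xs : Fin n → ℝ) (hxs : xs ∈ K)
    (lams : Fin m → ℝ) (hlams : ∀ i, 0 ≤ lams i)
    (hgrad : fderiv ℝ f xs + ∑ i, lams i • fderiv ℝ (g i) xs = 0)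
    (hcomp : ∀ i, lams i * g i xs = 0)
    (L : (Fin n → ℝ) → (Fin m → ℝ) → ℝ)
    (hL : ∀ x lam, L x lam = f x + ∑ i, lam i * g i x) :
    (∀ x : Fin n → ℝ, L x lams ≥ L xs lams) ∧
      (∀ lam : Fin m → ℝ, (∀ i, 0 ≤ lam i) → L xs lams ≥ L xs lam) := by
  have hconvex : ConvexOn ℝ univ fun x => f x + ∑ i, lams i * g i x :=
    hfc.add <| .fun_sum convex_univ fun i _ => (hgc i).smul (hlams i)
  have hcrit : HasFDerivAt (fun x => f x + ∑ i, lams i * g i x) (0 : _ →L[ℝ] ℝ) xs := by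
    rw [← hgrad]
    exact (hfd xs).hasFDerivAt.add <|
      .fun_sum fun i _ => (hgd i xs).hasFDerivAt.const_mul (lams i)
  have hfeas : ∀ i, g i xs ≤ 0 := by rwa [hK] at hxs
  refine ⟨fun x => ?_, fun lam hlam => ?_⟩
  · rw [hL, hL]
    exact hconvex.isMinOn_of_hasFDerivAt_eq_zero (mem_univ xs) hcrit (mem_univ x)
  · have hslack : ∑ i, lams i * g i xs = 0 := Finset.sum_eq_zero fun i _ => hcomp i
    have hpenalty : ∑ i, lam i * g i xs ≤ 0 :=
      Finset.sum_nonpos fun i _ => mul_nonpos_of_nonneg_of_nonpos (hlam i) (hfeas i)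
    rw [hL, hL]
    linarith
end
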